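/- Let Q0 = pqs(n,t1,t2,t3) be a linear query (no variable occurs in it more than once) in which n is ground. Then in any SLD-derivation for the program NQUEENS with initial query Q0 (under an arbitrary selection rule), each atom in each query is linear. -/

import Mathlib

/-! # First-order terms, substitutions, unification -/

inductive Term (F : Type) (V : Type) : Type
  | var : V → Term F V
  | app : F → List (Term F V) → Term F V

namespace Term

variable {F V : Type}

/-- The variable `v` occurs in the term. -/
inductive VarIn (v : V) : Term F V → Prop
  | var : VarIn v (Term.var v)
  | app {f : F} {ts : List (Term F V)} {t : Term F V} :
      t ∈ ts → VarIn v t → VarIn v (Term.app f ts)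

/-- A term is ground if it contains no variables. -/
def Ground (t : Term F V) : Prop := ∀ v, ¬ VarIn v t

/-- Application of a substitution (a map from variables to terms) to a term. -/
def subst (σ : V → Term F V) : Term F V → Term F V
  | var x => σ x
  | app f ts => app f (ts.attach.map fun ⟨t, _⟩ => t.subst σ)

/-- Number of occurrences of the variable `v` in a term. -/
def count [DecidableEq V] (v : V) : Term F V → ℕ
  | var x => if x = v then 1 else 0
  | app _ ts => (ts.attach.map fun ⟨t, _⟩ => t.count v).sum

/-- A term (or atom) is linear if no variable occurs in it more than once. -/
def Linear [DecidableEq V] (t : Term F V) : Prop := ∀ v, count v t ≤ 1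

def IsVar : Term F V → Prop
  | var _ => True
  | app _ _ => False

end Term

/-- A substitution. -/
abbrev Subst (F V : Type) := V → Term F V

/-- Composition of substitutions: `(σ.comp η)` is `ση`. -/
def Subst.comp {F V : Type} (σ η : Subst F V) : Subst F V := fun v => (σ v).subst η

/-- The substitution `{X/t}`. -/
def subst1 {F V : Type} [DecidableEq V] (X : V) (t : Term F V) : Subst F V :=
  fun v => if v = X then t else Term.var v

variable {F V : Type}

/-- `σ` unifies the two terms (or atoms) `A` and `H`. -/
def IsUnifierPair (σ : Subst F V) (A H : Term F V) : Prop := A.subst σ = H.subst σ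

/-- `σ` is a most general unifier of `A` and `H`. -/
def IsMGUPair (σ : Subst F V) (A H : Term F V) : Prop :=
  IsUnifierPair σ A H ∧ ∀ τ, IsUnifierPair τ A H → ∃ η, τ = σ.comp η

/-- An equation between terms. -/
abbrev Eqn (F V : Type) := Term F V × Term F V

/-- A set of equations. -/
abbrev EqSet (F V : Type) := Set (Eqn F V)

def Eqn.subst (σ : Subst F V) (e : Eqn F V) : Eqn F V := (e.1.subst σ, e.2.subst σ)

/-- `σ` is a unifier of the equation set `E`. -/
def IsUnifier (σ : Subst F V) (E : EqSet F V) : Prop := ∀ e ∈ E, e.1.subst σ = e.2.subst σ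

def Unifiable (E : EqSet F V) : Prop := ∃ σ, IsUnifier σ E

/-- `σ` is a most general unifier of the equation set `E`. -/
def IsMGU (σ : Subst F V) (E : EqSet F V) : Prop :=
  IsUnifier σ E ∧ ∀ τ, IsUnifier τ E → ∃ η, τ = σ.comp η

/-! # The Martelli–Montanari algorithm (MMA) and its occur-check-less version MMA⁻ -/

/-- The variable `X` occurs in the equation `e`. -/
def occursInEqn (X : V) (e : Eqn F V) : Prop := Term.VarIn X e.1 ∨ Term.VarIn X e.2

/-- The variable `X` occurs in equations of `E` other than `e`. -/
def occursElsewhere (X : V) (e : Eqn F V) (E : EqSet F V) : Prop :=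
  ∃ e' ∈ E, e' ≠ e ∧ occursInEqn X e'

/-- Action (2) of MMA is applicable: `E` contains a clash `f(s₁,…,sₘ) = g(t₁,…,tₙ)`
(distinct function symbols; in a signature with arities, the same name with different
numbers of arguments also counts as distinct symbols). -/
def Clash (E : EqSet F V) : Prop :=
  ∃ f ss g ts, (Term.app f ss, Term.app g ts) ∈ E ∧ (f ≠ g ∨ ss.length ≠ ts.length)

/-- Action (6) of MMA (the occur-check failure) is applicable to `E`. -/
def OccApplicable (E : EqSet F V) : Prop :=
  ∃ X t, (Term.var X, t) ∈ E ∧ Term.var X ≠ t ∧ Term.VarIn X t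

/-- A (non-failing) step of MMA: actions (1), (3), (4), (5). -/
inductive MMAStep [DecidableEq V] : EqSet F V → EqSet F V → Prop
  | decomp {E : EqSet F V} {f : F} {ss ts : List (Term F V)} :
      (Term.app f ss, Term.app f ts) ∈ E → ss.length = ts.length →
      MMAStep E ((E \ {(Term.app f ss, Term.app f ts)}) ∪ {e | e ∈ ss.zip ts})
  | del {E : EqSet F V} {X : V} : (Term.var X, Term.var X) ∈ E →
      MMAStep E (E \ {(Term.var X, Term.var X)})
  | orient {E : EqSet F V} {X : V} {t : Term F V} : (t, Term.var X) ∈ E → ¬ t.IsVar →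
      MMAStep E ((E \ {(t, Term.var X)}) ∪ {(Term.var X, t)})
  | elim {E : EqSet F V} {X : V} {t : Term F V} :
      (Term.var X, t) ∈ E → Term.var X ≠ t → ¬ Term.VarIn X t →
      occursElsewhere X (Term.var X, t) E →
      MMAStep E (insert (Term.var X, t) (Eqn.subst (subst1 X t) '' (E \ {(Term.var X, t)})))

/-- `E'` is reachable from `E` by (non-failing) MMA steps. -/
def MMAReach [DecidableEq V] (E E' : EqSet F V) : Prop := Relation.ReflTransGen MMAStep E E'

/-- `E` is not subject to occur-check: no run of MMA on `E` performs action (6),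
i.e. action (6) is not applicable to any equation set reachable by MMA from `E`. -/
def NSTO [DecidableEq V] (E : EqSet F V) : Prop :=
  ∀ E', MMAReach E E' → ¬ OccApplicable E'

/-- A solved equation set: `X₁=t₁, …, Xₙ=tₙ` with `X₁,…,Xₙ` distinct variables
none of which occurs in any `tᵢ`. -/
def SolvedSet (E : EqSet F V) : Prop :=
  (∀ e ∈ E, ∃ X, e.1 = Term.var X) ∧
  (∀ e ∈ E, ∀ e' ∈ E, e.1 = e'.1 → e = e') ∧
  (∀ e ∈ E, ∀ e' ∈ E, ∀ X, e.1 = Term.var X → ¬ Term.VarIn X e'.2)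

/-- The relation `X ≻_E Y`: for some equation `X = t` of `E`, `Y ∈ Var(t)`. -/
def succRel (E : EqSet F V) (X Y : V) : Prop := ∃ t, (Term.var X, t) ∈ E ∧ Term.VarIn Y t

/-- A semi-solved equation set: `X₁=t₁, …, Xₙ=tₙ` with `X₁,…,Xₙ` distinct variables,
no `tᵢ` equal to `Xᵢ`, and whenever `Xᵢ` occurs in some `tₖ` then `Xᵢ ≻⁺_E Xᵢ`. -/
def SemiSolved (E : EqSet F V) : Prop :=
  (∀ e ∈ E, ∃ X, e.1 = Term.var X) ∧
  (∀ e ∈ E, ∀ e' ∈ E, e.1 = e'.1 → e = e') ∧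
  (∀ e ∈ E, e.1 ≠ e.2) ∧
  (∀ X, (∃ e' ∈ E, Term.VarIn X e'.2) → (∃ t, (Term.var X, t) ∈ E) →
    Relation.TransGen (succRel E) X X)

/-- `σ` is the substitution represented by the (solved) equation set `E`. -/
def Represents (E : EqSet F V) (σ : Subst F V) : Prop :=
  ∀ v, (∃ t, (Term.var v, t) ∈ E ∧ σ v = t) ∨ ((∀ t, (Term.var v, t) ∉ E) ∧ σ v = Term.var v)

/-- There is an occur-check free run of MMA on `E`: a maximal run never performing
action (6), hence ending either by action (2) (failure on a clash) or with success
(no action applicable any more, the final set being solved). (MMA always terminates,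
so runs are finite.) -/
def ExistsOCFreeRun [DecidableEq V] (E : EqSet F V) : Prop :=
  ∃ E', MMAReach E E' ∧ (Clash E' ∨ SolvedSet E')

/-- `u` is obtained from `s` by replacing *some* of the occurrences of the variable `X`
by the term `t`. -/
inductive ReplSome [DecidableEq V] (X : V) (t : Term F V) : Term F V → Term F V → Prop
  | keep (v : V) : ReplSome X t (Term.var v) (Term.var v)
  | repl : ReplSome X t (Term.var X) t
  | app {f : F} {ss ts : List (Term F V)} :
      List.Forall₂ (ReplSome X t) ss ts → ReplSome X t (Term.app f ss) (Term.app f ts)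

def ReplSomeEqn [DecidableEq V] (X : V) (t : Term F V) (e e' : Eqn F V) : Prop :=
  ReplSome X t e.1 e'.1 ∧ ReplSome X t e.2 e'.2

/-- The labels of the actions of MMA⁻. -/
inductive MLabel (F V : Type) where
  | decomp | del | orient
  | elim (X : V) (t : Term F V)
  | elim' (X : V) (t : Term F V)

/-- A configuration of MMA⁻: the current equation set together with the set of
variables on which action (5) has already been performed. -/
abbrev MState (F V : Type) := EqSet F V × Set V

/-- A (non-failing) step of MMA⁻, labelled by the action used: actions (1), (3), (4),
(5) (with condition `X ≠ t` instead of the occur-check `X ∉ Var(t)`), and (5')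
(replacing some occurrences of `X` by `t` in the other equations, allowed only if
action (5) has previously been performed on an equation with left-hand side `X`). -/
inductive MMStepL [DecidableEq V] : MLabel F V → MState F V → MState F V → Prop
  | decomp {E : EqSet F V} {H : Set V} {f : F} {ss ts : List (Term F V)} :
      (Term.app f ss, Term.app f ts) ∈ E → ss.length = ts.length →
      MMStepL MLabel.decomp (E, H)
        ((E \ {(Term.app f ss, Term.app f ts)}) ∪ {e | e ∈ ss.zip ts}, H)
  | del {E : EqSet F V} {H : Set V} {X : V} : (Term.var X, Term.var X) ∈ E →
      MMStepL MLabel.del (E, H) (E \ {(Term.var X, Term.var X)}, H)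
  | orient {E : EqSet F V} {H : Set V} {X : V} {t : Term F V} :
      (t, Term.var X) ∈ E → ¬ t.IsVar →
      MMStepL MLabel.orient (E, H) ((E \ {(t, Term.var X)}) ∪ {(Term.var X, t)}, H)
  | elim {E : EqSet F V} {H : Set V} {X : V} {t : Term F V} :
      (Term.var X, t) ∈ E → Term.var X ≠ t →
      occursElsewhere X (Term.var X, t) E →
      MMStepL (MLabel.elim X t) (E, H)
        (insert (Term.var X, t) (Eqn.subst (subst1 X t) '' (E \ {(Term.var X, t)})),
         insert X H)
  | elim' {E : EqSet F V} {H : Set V} {X : V} {t : Term F V} {g : Eqn F V → Eqn F V} :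
      (Term.var X, t) ∈ E → Term.var X ≠ t →
      occursElsewhere X (Term.var X, t) E → X ∈ H →
      (∀ e ∈ E \ {(Term.var X, t)}, ReplSomeEqn X t e (g e)) →
      MMStepL (MLabel.elim' X t) (E, H)
        (insert (Term.var X, t) (g '' (E \ {(Term.var X, t)})), H)

/-- A (non-failing) step of MMA⁻. -/
def MMStep [DecidableEq V] (s s' : MState F V) : Prop := ∃ l, MMStepL l s s'

/-- Reachability by (non-failing) steps of MMA⁻. A run of MMA⁻ on an equation set `E`
starts in the configuration `(E, ∅)`; it terminates with failure when action (2) is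
performed (a clash is present), and it may terminate with success when the current
equation set is semi-solved. -/
def MMReach [DecidableEq V] (s s' : MState F V) : Prop := Relation.ReflTransGen MMStep s s'
/-! # Definite clause programs, SLD-resolution, and the program NQUEENS -/

/-- A definite clause `head :- body` (atoms are represented as terms whose top
symbol is a predicate symbol). -/
structure Clause (F V : Type) where
  head : Term F V
  body : List (Term F V)

/-- A renaming: a substitution given by a permutation of the variables. -/
def IsRenaming (σ : Subst F V) : Prop := ∃ ρ : V ≃ V, ∀ v, σ v = Term.var (ρ v)

/-- The variant of a clause obtained by applying a (renaming) substitution. -/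
def Clause.rename (c : Clause F V) (σ : Subst F V) : Clause F V :=
  ⟨c.head.subst σ, c.body.map (Term.subst σ)⟩

/-- The variable `v` occurs in the clause `c`. -/
def Clause.varIn (c : Clause F V) (v : V) : Prop :=
  Term.VarIn v c.head ∨ ∃ b ∈ c.body, Term.VarIn v b

/-- The variable `v` occurs in the query `Q` (a query is a finite list of atoms). -/
def queryVars (Q : List (Term F V)) (v : V) : Prop := ∃ A ∈ Q, Term.VarIn v A

/-- One SLD-resolution step: some atom `A` of the query is selected (the selection
rule being arbitrary), a standardized-apart variant of a clause of `P` is taken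
(its variables disjoint from those of the query) whose head unifies with `A` with
mgu `θ`; `A` is replaced by the body of the variant and `θ` is applied. -/
inductive SLDStep (P : List (Clause F V)) : List (Term F V) → List (Term F V) → Prop
  | step {Q1 Q2 : List (Term F V)} {A : Term F V} {c : Clause F V} {σ θ : Subst F V} :
      c ∈ P → IsRenaming σ →
      (∀ v, (c.rename σ).varIn v → ¬ queryVars (Q1 ++ A :: Q2) v) →
      IsMGUPair θ A (c.rename σ).head →
      SLDStep P (Q1 ++ A :: Q2) ((Q1 ++ (c.rename σ).body ++ Q2).map (Term.subst θ))

/-- `Q` is a query of some SLD-derivation for `P` starting with `Q0`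
(under an arbitrary selection rule). -/
def SLDReach (P : List (Clause F V)) (Q0 Q : List (Term F V)) : Prop :=
  Relation.ReflTransGen (SLDStep P) Q0 Q

/-- Unification of `A` and `H` is available in an SLD-derivation for `P` with `Q0`:
`A` is a (possibly selected) atom of a query of the derivation and `H` is a
standardized-apart head of a clause of `P` with the same predicate symbol as `A`. -/
def AvailableUnif (P : List (Clause F V)) (Q0 : List (Term F V)) (A Hd : Term F V) : Prop :=
  ∃ Q, SLDReach P Q0 Q ∧ A ∈ Q ∧
    ∃ c ∈ P, ∃ σ, IsRenaming σ ∧ Hd = (c.rename σ).head ∧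
      (∀ v, (c.rename σ).varIn v → ¬ queryVars Q v) ∧
      (∃ f as hs, A = Term.app f as ∧ Hd = Term.app f hs)

/-- The first argument of every atom of the query is ground. -/
def FirstArgGround (Q : List (Term F V)) : Prop :=
  ∀ A ∈ Q, ∀ f ts, A = Term.app f ts → ∀ t, ts.head? = some t → Term.Ground t

/-- The signature of the program NQUEENS: the constant `0`, the unary `s`,
the list constructor `[·|·]`, and the predicate symbols `pqs` and `pq`. -/
inductive NQF : Type
  | zero | succ | cons | pqs | pq
  deriving DecidableEq

def nqZero : Term NQF ℕ := Term.app NQF.zero []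
def nqS (t : Term NQF ℕ) : Term NQF ℕ := Term.app NQF.succ [t]
def nqCons (h t : Term NQF ℕ) : Term NQF ℕ := Term.app NQF.cons [h, t]
def nqPqs (a b c d : Term NQF ℕ) : Term NQF ℕ := Term.app NQF.pqs [a, b, c, d]
def nqPq (a b c d : Term NQF ℕ) : Term NQF ℕ := Term.app NQF.pq [a, b, c, d]

open Term in
/-- `pqs(0,_,_,_).` -/
def clause1 : Clause NQF ℕ := ⟨nqPqs nqZero (var 0) (var 1) (var 2), []⟩

open Term in
/-- `pqs(s(I),Cs,Us,[_|Ds]) :- pqs(I,Cs,[_|Us],Ds), pq(s(I),Cs,Us,Ds).`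
with `I,Cs,Us,Ds` = `0,1,2,3` and the underscores `4,5`. -/
def clause2 : Clause NQF ℕ :=
  ⟨nqPqs (nqS (var 0)) (var 1) (var 2) (nqCons (var 4) (var 3)),
   [nqPqs (var 0) (var 1) (nqCons (var 5) (var 2)) (var 3),
    nqPq (nqS (var 0)) (var 1) (var 2) (var 3)]⟩

open Term in
/-- `pq(I,[I|_],[I|_],[I|_]).` -/
def clause3 : Clause NQF ℕ :=
  ⟨nqPq (var 0) (nqCons (var 0) (var 1)) (nqCons (var 0) (var 2)) (nqCons (var 0) (var 3)),
   []⟩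

open Term in
/-- `pq(I,[_|Cs],[_|Us],[_|Ds]) :- pq(I,Cs,Us,Ds).` -/
def clause4 : Clause NQF ℕ :=
  ⟨nqPq (var 0) (nqCons (var 4) (var 1)) (nqCons (var 5) (var 2)) (nqCons (var 6) (var 3)),
   [nqPq (var 0) (var 1) (var 2) (var 3)]⟩

/-- The program NQUEENS. -/
def NQUEENS : List (Clause NQF ℕ) := [clause1, clause2, clause3, clause4]

/-!
The invariant is that every atom of the query is linear and has a ground first argument.
The second half is preserved because in each clause of NQUEENS the first argument of every
body atom only uses variables of the first argument of the head.

For linearity: a linear atom and a variable-disjoint linear head, if unifiable, have an mgu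
that binds variables of either side to subterms of the other side, with pairwise disjoint
ranges. It keeps linear every linear term sharing no variable with one of the two sides, and
any other mgu differs from it by a renaming on its range. The other atoms of the query avoid
the head, and the body atoms avoid the selected atom. The head `pq(I,[I|_],[I|_],[I|_])` of
clause (3) is not linear, but the ground first argument of the selected atom forces the value
of `I`, and once `I` is instantiated the head is linear.
-/

namespace Term

@[elab_as_elim]
theorem induction_on {motive : Term F V → Prop} (t : Term F V)
    (var : ∀ v, motive (var v))
    (app : ∀ f ts, (∀ t ∈ ts, motive t) → motive (app f ts)) : motive t :=
  match t with
  | .var v => var v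
  | .app f ts => app f ts fun t _ => induction_on t var app

@[simp] theorem subst_var (σ : Subst F V) (v : V) : (var v).subst σ = σ v := by rw [subst]

@[simp] theorem subst_app (σ : Subst F V) (f : F) (ts : List (Term F V)) :
    (app f ts).subst σ = app f (ts.map (·.subst σ)) := by
  rw [subst, List.attach_map_val]

def vars : Term F V → List V
  | var v => [v]
  | app _ ts => ts.attach.flatMap fun ⟨t, _⟩ => t.vars

@[simp] theorem vars_var (v : V) : (var v : Term F V).vars = [v] := by rw [vars]

@[simp] theorem vars_app (f : F) (ts : List (Term F V)) :
    (app f ts).vars = ts.flatMap vars := by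
  rw [vars, List.flatMap_def, List.flatMap_def, List.attach_map_val]

theorem mem_vars {v : V} {t : Term F V} : v ∈ t.vars ↔ VarIn v t := by
  induction t using induction_on with
  | var w =>
    simp only [vars_var, List.mem_singleton]
    exact ⟨by rintro rfl; exact .var, by rintro ⟨⟩; rfl⟩
  | app f ts ih =>
    simp only [vars_app, List.mem_flatMap]
    refine ⟨fun ⟨t, ht, hv⟩ => .app ht ((ih t ht).1 hv), ?_⟩
    rintro (_ | ⟨ht, hv⟩)
    exact ⟨_, ht, (ih _ ht).2 hv⟩

theorem ground_iff_vars_eq_nil {t : Term F V} : t.Ground ↔ t.vars = [] := by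
  simp [Ground, List.eq_nil_iff_forall_not_mem, mem_vars]

theorem count_eq_count_vars [DecidableEq V] (v : V) (t : Term F V) :
    t.count v = t.vars.count v := by
  induction t using induction_on with
  | var w => simp [count, List.count_singleton]
  | app f ts ih =>
    rw [count, vars_app, List.count_flatMap, List.attach_map_val (l := ts) (f := (count v ·))]
    exact congrArg List.sum (List.map_congr_left ih)

theorem linear_iff_nodup [DecidableEq V] {t : Term F V} : t.Linear ↔ t.vars.Nodup := by
  simp only [Linear, List.nodup_iff_count_le_one, count_eq_count_vars]

theorem subst_subst (σ η : Subst F V) (t : Term F V) :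
    (t.subst σ).subst η = t.subst (σ.comp η) := by
  induction t using induction_on with
  | var v => simp [Subst.comp]
  | app f ts ih => simpa using List.map_congr_left ih

theorem subst_congr {σ σ' : Subst F V} {t : Term F V} (h : ∀ v ∈ t.vars, σ v = σ' v) :
    t.subst σ = t.subst σ' := by
  induction t using induction_on with
  | var v => simpa using h
  | app f ts ih =>
    simp only [subst_app, app.injEq, true_and]
    exact List.map_congr_left fun t ht => ih t ht fun v hv => h v (by simpa using ⟨t, ht, hv⟩)

@[simp] theorem subst_id (t : Term F V) : t.subst var = t := by
  induction t using induction_on with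
  | var v => simp
  | app f ts ih => simpa using List.map_congr_left ih

theorem subst_eq_self {σ : Subst F V} {t : Term F V} (h : ∀ v ∈ t.vars, σ v = var v) :
    t.subst σ = t :=
  (subst_congr h).trans (subst_id t)

theorem Ground.subst_eq {t : Term F V} (ht : t.Ground) (σ : Subst F V) : t.subst σ = t :=
  subst_eq_self fun v hv => absurd (mem_vars.1 hv) (ht v)

theorem eq_var_of_subst_eq_self {σ : Subst F V} {t : Term F V} (h : t.subst σ = t) :
    ∀ v ∈ t.vars, σ v = var v := by
  induction t using induction_on with
  | var w => simpa using h
  | app f ts ih =>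
    simp only [subst_app, app.injEq, true_and] at h
    have h := List.map_inj_left.1 (h.trans (List.map_id ts).symm)
    simp only [vars_app, List.mem_flatMap]
    rintro v ⟨t, ht, hv⟩
    exact ih t ht (h t ht) v hv

theorem vars_subst (σ : Subst F V) (t : Term F V) :
    (t.subst σ).vars = t.vars.flatMap fun v => (σ v).vars := by
  induction t using induction_on with
  | var v => simp
  | app f ts ih =>
    simp only [subst_app, vars_app, List.flatMap_assoc, List.flatMap_map]
    exact List.flatMap_congr ih

theorem vars_subst_subset {u h : Term F V} (huh : u.vars ⊆ h.vars) (σ : Subst F V) :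
    (u.subst σ).vars ⊆ (h.subst σ).vars := by
  intro v hv
  simp only [vars_subst, List.mem_flatMap] at hv ⊢
  obtain ⟨w, hw, hv⟩ := hv
  exact ⟨w, huh hw, hv⟩

theorem Linear.subst_renaming [DecidableEq V] {t : Term F V} (ht : t.Linear) {σ : Subst F V}
    {ρ : V → V} (hρ : Function.Injective ρ) (hσ : ∀ v, σ v = var (ρ v)) :
    (t.subst σ).Linear := by
  rw [linear_iff_nodup] at ht ⊢
  simpa [vars_subst, hσ, ← List.map_eq_flatMap] using ht.map hρ

theorem first_arg_subst_eq {A H a h : Term F V} {p q : F} {as hs : List (Term F V)}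
    {τ : Subst F V} (hA : A = app p (a :: as)) (ha : a.Ground) (hH : H = app q (h :: hs))
    (hτ : IsUnifierPair τ A H) : h.subst τ = a := by
  simp only [IsUnifierPair, hA, hH, subst_app, List.map_cons, app.injEq, List.cons.injEq] at hτ
  rw [← hτ.2.1, ha.subst_eq]

theorem subst_subst1_of_not_mem [DecidableEq V] {x : V} {t : Term F V} (u : Term F V)
    (hx : x ∉ t.vars) : t.subst (subst1 x u) = t :=
  subst_eq_self fun v hv => if_neg fun h : v = x => hx (h ▸ hv)

end Term

theorem Subst.comp_assoc (σ η τ : Subst F V) : (σ.comp η).comp τ = σ.comp (η.comp τ) :=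
  funext fun v => Term.subst_subst η τ (σ v)

theorem List.sizeOf_append_add_one {α : Type*} [SizeOf α] (l₁ l₂ : List α) :
    sizeOf (l₁ ++ l₂) + 1 = sizeOf l₁ + sizeOf l₂ := by
  induction l₁ with
  | nil => simp only [List.nil_append, List.nil.sizeOf_spec]; omega
  | cons a l ih => simp only [List.cons_append, List.cons.sizeOf_spec]; omega

open Term

theorem subst1_comp_eq [DecidableEq V] {x : V} {t : Term F V} {τ : Subst F V}
    (h : τ x = t.subst τ) : (subst1 x t).comp τ = τ := by
  funext v
  by_cases hv : v = x
  · subst hv; simp [Subst.comp, subst1, h]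
  · simp [Subst.comp, subst1, hv]

theorem mem_vars_subst_subst1 [DecidableEq V] {x v : V} {s t : Term F V}
    (hv : v ∈ (s.subst (subst1 x t)).vars) : v ∈ s.vars ∧ v ≠ x ∨ v ∈ t.vars := by
  simp only [vars_subst, List.mem_flatMap, subst1] at hv
  obtain ⟨w, hw, hv⟩ := hv
  split_ifs at hv with hwx
  · exact .inr hv
  · rw [vars_var, List.mem_singleton] at hv
    subst hv
    exact .inl ⟨hw, hwx⟩

theorem nodup_vars_subst_subst1 [DecidableEq V] {x : V} {s t : Term F V} (hs : s.vars.Nodup)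
    (ht : t.vars.Nodup) (hst : ∀ v ∈ t.vars, v ∉ s.vars) :
    (s.subst (subst1 x t)).vars.Nodup := by
  rw [vars_subst, List.nodup_flatMap]
  refine ⟨fun v _ => ?_, hs.pairwise_of_forall_ne fun v hv w hw hvw => ?_⟩
  · unfold subst1; split_ifs <;> simp [ht]
  · simp only [Function.onFun, subst1]
    split_ifs with h1 h2 h2
    · exact absurd (h1.trans h2.symm) hvw
    · simpa using fun hwt => hst w hwt hw
    · simpa using fun hvt => hst v hvt hv
    · simpa using Ne.symm hvw

-- The equations `us[i] = hs[i]` are given as two lists, so that decomposing `f(as) = f(bs)`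
-- turns them into `as ++ us = bs ++ hs`.
structure IsLinearMGU (μ : Subst F V) (us hs : List (Term F V)) : Prop where
  map_subst_eq : us.map (·.subst μ) = hs.map (·.subst μ)
  comp_eq : ∀ τ : Subst F V, us.map (·.subst τ) = hs.map (·.subst τ) → μ.comp τ = τ
  eq_var : ∀ v, v ∉ us.flatMap vars → v ∉ hs.flatMap vars → μ v = var v
  nodup_vars_subst : ∀ s : Term F V, s.vars.Nodup → (∀ v ∈ s.vars, v ∉ hs.flatMap vars) →
    (s.subst μ).vars.Nodup

theorem isLinearMGU_nil : IsLinearMGU (var : Subst F V) [] [] :=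
  ⟨rfl, fun _ _ => funext fun _ => by simp [Subst.comp], fun _ _ _ => rfl,
    fun s hs _ => by simpa using hs⟩

namespace IsLinearMGU

variable {μ : Subst F V} {us hs : List (Term F V)}

theorem subst_eq_self (hμ : IsLinearMGU μ us hs) {t : Term F V}
    (hu : ∀ v ∈ t.vars, v ∉ us.flatMap vars) (hh : ∀ v ∈ t.vars, v ∉ hs.flatMap vars) :
    t.subst μ = t :=
  Term.subst_eq_self fun v hv => hμ.eq_var v (hu v hv) (hh v hv)

theorem subst_subst1_comp [DecidableEq V] {x : V} {t u : Term F V} (hx : x ∉ u.vars) :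
    u.subst ((subst1 x t).comp μ) = u.subst μ := by
  rw [← subst_subst, subst_subst1_of_not_mem t hx]

theorem map_subst_subst1_comp [DecidableEq V] {x : V} {t : Term F V} {ts : List (Term F V)}
    (hx : x ∉ ts.flatMap vars) :
    ts.map (·.subst ((subst1 x t).comp μ)) = ts.map (·.subst μ) :=
  List.map_congr_left fun u hu => subst_subst1_comp fun h => hx (List.mem_flatMap.2 ⟨u, hu, h⟩)

theorem cons_var_left [DecidableEq V] (hμ : IsLinearMGU μ us hs) {x : V} {t : Term F V}
    (hnd : ((var x :: us).flatMap vars ++ (t :: hs).flatMap vars).Nodup) :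
    IsLinearMGU ((subst1 x t).comp μ) (var x :: us) (t :: hs) := by
  simp only [List.flatMap_cons, vars_var, List.singleton_append, List.nodup_cons,
    List.nodup_append, List.mem_append] at hnd
  obtain ⟨⟨hxu, -⟩, ⟨htnd, -, hdisj'⟩, hdisj⟩ := hnd
  have hxt : x ∉ t.vars := fun h => hdisj x (.head _) x (.inl h) rfl
  have hxh : x ∉ hs.flatMap vars := fun h => hdisj x (.head _) x (.inr h) rfl
  have htu : ∀ v ∈ t.vars, v ∉ us.flatMap vars := fun v hv hvu =>
    hdisj v (.tail _ hvu) v (.inl hv) rfl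
  have hth : ∀ v ∈ t.vars, v ∉ hs.flatMap vars := fun v hv hvh => hdisj' v hv v hvh rfl
  have ht : t.subst μ = t := hμ.subst_eq_self htu hth
  refine ⟨?_, fun τ hτ => ?_, fun v hvu hvh => ?_, fun s hs hsh => ?_⟩
  · simp only [List.map_cons, subst_var, subst_subst1_comp hxt, map_subst_subst1_comp hxu,
      map_subst_subst1_comp hxh, hμ.map_subst_eq, ht]
    simp [Subst.comp, subst1, ht]
  · simp only [List.map_cons, List.cons.injEq, subst_var] at hτ
    rw [Subst.comp_assoc, hμ.comp_eq τ hτ.2, subst1_comp_eq hτ.1]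
  · simp only [List.flatMap_cons, vars_var, List.mem_append, List.mem_singleton,
      not_or] at hvu hvh
    simp [Subst.comp, subst1, hvu.1, hμ.eq_var v hvu.2 hvh.2]
  · simp only [List.flatMap_cons, List.mem_append, not_or] at hsh
    rw [← subst_subst]
    refine hμ.nodup_vars_subst _ (nodup_vars_subst_subst1 hs htnd
      fun v hvt hvs => (hsh v hvs).1 hvt) fun v hv => ?_
    rcases mem_vars_subst_subst1 hv with h | h
    exacts [(hsh v h.1).2, hth v h]

theorem cons_var_right [DecidableEq V] (hμ : IsLinearMGU μ us hs) {x : V} {t : Term F V}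
    (hnd : ((t :: us).flatMap vars ++ (var x :: hs).flatMap vars).Nodup) :
    IsLinearMGU ((subst1 x t).comp μ) (t :: us) (var x :: hs) := by
  simp only [List.flatMap_cons, vars_var, List.singleton_append, List.nodup_cons,
    List.nodup_append, List.mem_append] at hnd
  obtain ⟨⟨htnd, -, hdisj'⟩, ⟨hxh, -⟩, hdisj⟩ := hnd
  have hxt : x ∉ t.vars := fun h => hdisj x (.inl h) x (.head _) rfl
  have hxu : x ∉ us.flatMap vars := fun h => hdisj x (.inr h) x (.head _) rfl
  have htu : ∀ v ∈ t.vars, v ∉ us.flatMap vars := fun v hv hvu => hdisj' v hv v hvu rfl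
  have hth : ∀ v ∈ t.vars, v ∉ hs.flatMap vars := fun v hv hvh =>
    hdisj v (.inl hv) v (.tail _ hvh) rfl
  have ht : t.subst μ = t := hμ.subst_eq_self htu hth
  refine ⟨?_, fun τ hτ => ?_, fun v hvu hvh => ?_, fun s hs hsh => ?_⟩
  · simp only [List.map_cons, subst_var, subst_subst1_comp hxt, map_subst_subst1_comp hxu,
      map_subst_subst1_comp hxh, hμ.map_subst_eq, ht]
    simp [Subst.comp, subst1, ht]
  · simp only [List.map_cons, List.cons.injEq, subst_var] at hτ
    rw [Subst.comp_assoc, hμ.comp_eq τ hτ.2, subst1_comp_eq hτ.1.symm]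
  · simp only [List.flatMap_cons, vars_var, List.mem_append, List.mem_singleton,
      not_or] at hvu hvh
    simp [Subst.comp, subst1, hvh.1, hμ.eq_var v hvu.2 hvh.2]
  · simp only [List.flatMap_cons, vars_var, List.mem_append, List.mem_singleton,
      not_or] at hsh
    rw [subst_subst1_comp fun h => (hsh x h).1 rfl]
    exact hμ.nodup_vars_subst s hs fun v hv => (hsh v hv).2

theorem app_cons {f : F} {as bs : List (Term F V)} (hμ : IsLinearMGU μ (as ++ us) (bs ++ hs))
    (hlen : as.length = bs.length) : IsLinearMGU μ (app f as :: us) (app f bs :: hs) := by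
  have hmap : ∀ τ : Subst F V,
      (app f as :: us).map (·.subst τ) = (app f bs :: hs).map (·.subst τ) ↔
        (as ++ us).map (·.subst τ) = (bs ++ hs).map (·.subst τ) := fun τ => by
    simp only [List.map_cons, subst_app, List.cons.injEq, app.injEq, true_and, List.map_append]
    exact ⟨fun h => by rw [h.1, h.2], fun h => List.append_inj h (by simpa using hlen)⟩
  have hvars : ∀ ts rest : List (Term F V),
      (app f ts :: rest).flatMap vars = (ts ++ rest).flatMap vars := by
    simp
  refine ⟨(hmap μ).2 hμ.map_subst_eq, fun τ hτ => hμ.comp_eq τ ((hmap τ).1 hτ), ?_, ?_⟩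
  · simpa only [hvars] using hμ.eq_var
  · simpa only [hvars] using hμ.nodup_vars_subst

end IsLinearMGU

theorem exists_isLinearMGU [DecidableEq V] :
    ∀ (us hs : List (Term F V)) (τ : Subst F V), us.map (·.subst τ) = hs.map (·.subst τ) →
      (us.flatMap vars ++ hs.flatMap vars).Nodup → ∃ μ, IsLinearMGU μ us hs
  | [], [], _, _, _ => ⟨var, isLinearMGU_nil⟩
  | [], _ :: _, _, h, _ | _ :: _, [], _, h, _ => by simp at h
  | var x :: us, t :: hs, τ, h, hnd => by
    obtain ⟨μ, hμ⟩ := exists_isLinearMGU us hs τ (List.cons.inj h).2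
      (hnd.sublist (by simp))
    exact ⟨_, hμ.cons_var_left hnd⟩
  | app f as :: us, var y :: hs, τ, h, hnd => by
    obtain ⟨μ, hμ⟩ := exists_isLinearMGU us hs τ (List.cons.inj h).2
      (hnd.sublist (by simp))
    exact ⟨_, hμ.cons_var_right hnd⟩
  | app f as :: us, app g bs :: hs, τ, h, hnd => by
    simp only [List.map_cons, subst_app, List.cons.injEq, app.injEq] at h
    obtain ⟨⟨rfl, has⟩, hus⟩ := h
    have hlen : as.length = bs.length := by simpa using congrArg List.length has
    obtain ⟨μ, hμ⟩ := exists_isLinearMGU (as ++ us) (bs ++ hs) τ (by simp [has, hus])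
      (by simpa using hnd)
    exact ⟨μ, hμ.app_cons hlen⟩
termination_by us => sizeOf us
decreasing_by
  all_goals simp only [List.cons.sizeOf_spec, app.sizeOf_spec, var.sizeOf_spec]
  · omega
  · omega
  · have := List.sizeOf_append_add_one as us
    omega


theorem nodup_vars_subst_of_comp_eq_var {s : Term F V} {θ η : Subst F V} (hs : s.vars.Nodup)
    (h : ∀ w ∈ s.vars, θ.comp η w = var w) : (s.subst θ).vars.Nodup := by
  have hvar : ∀ w ∈ s.vars, ∃ y, θ w = var y := fun w hw => by
    have := h w hw
    unfold Subst.comp at this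
    cases hθ : θ w with
    | var y => exact ⟨y, rfl⟩
    | app f ts => rw [hθ, subst_app] at this; cases this
  rw [vars_subst, List.nodup_flatMap]
  refine ⟨fun w hw => ?_, hs.pairwise_of_forall_ne fun w hw w' hw' hne => ?_⟩
  · obtain ⟨y, hy⟩ := hvar w hw
    simp [hy]
  · obtain ⟨y, hy⟩ := hvar w hw
    obtain ⟨y', hy'⟩ := hvar w' hw'
    have h₁ := h w hw
    have h₂ := h w' hw'
    simp only [Subst.comp, hy, hy', subst_var] at h₁ h₂
    simp only [Function.onFun, hy, hy', vars_var, List.disjoint_singleton, List.mem_singleton]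
    rintro rfl
    exact hne (var.inj (h₁.symm.trans h₂))

theorem nodup_vars_subst_of_isMGU [DecidableEq V] {us hs : List (Term F V)} {θ : Subst F V}
    (hθ : us.map (·.subst θ) = hs.map (·.subst θ))
    (hmgu : ∀ τ : Subst F V, us.map (·.subst τ) = hs.map (·.subst τ) → ∃ η, τ = θ.comp η)
    (hnd : (us.flatMap vars ++ hs.flatMap vars).Nodup) {s : Term F V} (hsn : s.vars.Nodup)
    (hsh : ∀ v ∈ s.vars, v ∉ hs.flatMap vars) : (s.subst θ).vars.Nodup := by
  obtain ⟨μ, hμ⟩ := exists_isLinearMGU us hs θ hθ hnd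
  obtain ⟨η, hη⟩ := hmgu μ hμ.map_subst_eq
  have hμθ : μ.comp θ = θ := hμ.comp_eq θ hθ
  have hidem : μ.comp μ = μ := calc
    μ.comp μ = (μ.comp θ).comp η := by rw [Subst.comp_assoc, ← hη]
    _ = μ := by rw [hμθ, hη]
  -- `sθ = (sμ)θ`, and `θ` renames the variables of `sμ` since `θη = μ` fixes them.
  rw [← hμθ, ← subst_subst]
  refine nodup_vars_subst_of_comp_eq_var (η := η) (hμ.nodup_vars_subst s hsn hsh)
    fun w hw => ?_
  obtain ⟨v, -, hw⟩ := List.mem_flatMap.1 ((vars_subst μ s) ▸ hw)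
  rw [← hη]
  exact eq_var_of_subst_eq_self (congrFun hidem v) w hw

theorem IsMGUPair.symm {θ : Subst F V} {A H : Term F V} (hθ : IsMGUPair θ A H) :
    IsMGUPair θ H A :=
  ⟨hθ.1.symm, fun τ hτ => hθ.2 τ hτ.symm⟩

theorem IsMGUPair.linear_subst [DecidableEq V] {θ : Subst F V} {A H s : Term F V}
    (hθ : IsMGUPair θ A H) (hA : A.Linear) (hH : H.Linear)
    (hAH : ∀ v, VarIn v A → ¬ VarIn v H) (hs : s.Linear)
    (hsH : ∀ v, VarIn v s → ¬ VarIn v H) : (s.subst θ).Linear := by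
  rw [linear_iff_nodup] at hA hH hs ⊢
  refine nodup_vars_subst_of_isMGU (us := [A]) (hs := [H])
    (by simpa [IsUnifierPair] using hθ.1)
    (fun τ hτ => hθ.2 τ (by simpa [IsUnifierPair] using hτ)) ?_ hs
    (by simpa [mem_vars] using hsH)
  simp only [List.flatMap_singleton, List.nodup_append, hA, hH, true_and]
  rintro v hvA _ hvH rfl
  exact hAH v (mem_vars.1 hvA) (mem_vars.1 hvH)

theorem IsMGUPair.linear_subst_of_forced_binding [DecidableEq V] {θ : Subst F V}
    {A H a s : Term F V} {x : V} (hθ : IsMGUPair θ A H)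
    (hx : ∀ τ, IsUnifierPair τ A H → τ x = a) (ha : a.Ground) (hxH : VarIn x H)
    (hA : A.Linear) (hH : (H.subst (subst1 x a)).Linear) (hAH : ∀ v, VarIn v A → ¬ VarIn v H)
    (hs : s.Linear) (hsH : ∀ v, VarIn v s → ¬ VarIn v H) : (s.subst θ).Linear := by
  have hsubst1 : ∀ τ : Subst F V, τ x = a → (H.subst (subst1 x a)).subst τ = H.subst τ :=
    fun τ hτ => by rw [subst_subst, subst1_comp_eq (by rw [hτ, ha.subst_eq])]
  have hvarsH : ∀ v ∈ (H.subst (subst1 x a)).vars, VarIn v H ∧ v ≠ x := fun v hv => by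
    rcases mem_vars_subst_subst1 hv with h | h
    exacts [⟨mem_vars.1 h.1, h.2⟩, absurd (mem_vars.1 h) (ha v)]
  have ha' : a.vars = [] := ground_iff_vars_eq_nil.1 ha
  rw [linear_iff_nodup] at hA hH hs ⊢
  refine nodup_vars_subst_of_isMGU (us := [A, var x]) (hs := [H.subst (subst1 x a), a])
    ?_ (fun τ hτ => hθ.2 τ ?_) ?_ hs ?_
  · simp [hsubst1 θ (hx θ hθ.1), hθ.1.symm, hx θ hθ.1, ha.subst_eq]
  · simp only [List.map_cons, List.map_nil, List.cons.injEq, subst_var, ha.subst_eq] at hτ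
    rw [IsUnifierPair, hτ.1, hsubst1 τ hτ.2.1]
  · simp only [List.flatMap_cons, List.flatMap_nil, vars_var, ha', List.append_nil,
      List.nodup_append, List.nodup_singleton, List.mem_singleton, forall_eq, hA, hH, true_and]
    refine ⟨?_, ?_⟩
    · rintro v hv rfl
      exact hAH v (mem_vars.1 hv) hxH
    · rintro v hv w hw rfl
      rcases List.mem_append.1 hv with hv | hv
      · exact hAH v (mem_vars.1 hv) (hvarsH v hw).1
      · exact (hvarsH v hw).2 (List.mem_singleton.1 hv)
  · simp only [List.flatMap_cons, List.flatMap_nil, ha', List.append_nil]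
    exact fun v hv hvH => hsH v (mem_vars.1 hv) (hvarsH v hvH).1

def HasGroundFirstArg (A : Term F V) : Prop :=
  ∃ p a as, A = app p (a :: as) ∧ a.Ground

theorem HasGroundFirstArg.subst {A : Term F V} (hA : HasGroundFirstArg A) (σ : Subst F V) :
    HasGroundFirstArg (A.subst σ) := by
  obtain ⟨p, a, as, rfl, ha⟩ := hA
  exact ⟨p, a, as.map (·.subst σ), by simp [ha.subst_eq], ha⟩

-- Well-modedness for the mode in which the first argument is the only input position.
def Clause.FirstArgVarsInHead (c : Clause F V) : Prop :=
  ∃ p h hs, c.head = app p (h :: hs) ∧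
    ∀ b ∈ c.body, ∃ q u us, b = app q (u :: us) ∧ u.vars ⊆ h.vars

theorem Clause.FirstArgVarsInHead.rename {c : Clause F V} (hc : c.FirstArgVarsInHead)
    (σ : Subst F V) : (c.rename σ).FirstArgVarsInHead := by
  obtain ⟨p, h, hs, hhead, hbody⟩ := hc
  refine ⟨p, h.subst σ, hs.map (·.subst σ), by simp [Clause.rename, hhead], fun b hb => ?_⟩
  obtain ⟨b, hb', rfl⟩ := List.mem_map.1 hb
  obtain ⟨q, u, us, rfl, huh⟩ := hbody b hb'
  exact ⟨q, u.subst σ, us.map (·.subst σ), by simp, vars_subst_subset huh σ⟩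

theorem Clause.FirstArgVarsInHead.hasGroundFirstArg_subst {c : Clause F V}
    (hc : c.FirstArgVarsInHead) {A : Term F V} (hA : HasGroundFirstArg A) {θ : Subst F V}
    (hθ : IsUnifierPair θ A c.head) : ∀ b ∈ c.body, HasGroundFirstArg (b.subst θ) := by
  obtain ⟨p, h, hs, hhead, hbody⟩ := hc
  obtain ⟨p', a, as, hA, ha⟩ := hA
  have hh : (h.subst θ).vars = [] := by
    rw [first_arg_subst_eq hA ha hhead hθ, ← ground_iff_vars_eq_nil]; exact ha
  intro b hb
  obtain ⟨q, u, us, rfl, huh⟩ := hbody b hb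
  refine ⟨q, u.subst θ, us.map (·.subst θ), by simp, ground_iff_vars_eq_nil.2 ?_⟩
  exact List.eq_nil_of_subset_nil (hh ▸ vars_subst_subset huh θ)

theorem nqueens_firstArgVarsInHead : ∀ c ∈ NQUEENS, c.FirstArgVarsInHead := by
  simp only [NQUEENS, List.mem_cons, List.not_mem_nil, or_false, forall_eq_or_imp, forall_eq]
  refine ⟨?_, ?_, ?_, ?_⟩ <;>
    exact ⟨_, _, _, rfl, by simp [clause1, clause2, clause3, clause4, nqPqs, nqPq, nqS, nqCons]⟩

theorem nqueens_body_linear : ∀ c ∈ NQUEENS, ∀ b ∈ c.body, b.Linear := by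
  simp [NQUEENS, clause1, clause2, clause3, clause4, nqPqs, nqPq, nqS, nqCons, linear_iff_nodup]

theorem nqueens_head_linear : ∀ c ∈ NQUEENS, c ≠ clause3 → c.head.Linear := by
  simp [NQUEENS, clause1, clause2, clause3, clause4, nqPqs, nqPq, nqS, nqCons, nqZero,
    linear_iff_nodup]

theorem nqueens_resolvent_linear {c : Clause NQF ℕ} (hc : c ∈ NQUEENS) {σ : Subst NQF ℕ}
    {ρ : ℕ → ℕ} (hρ : Function.Injective ρ) (hσ : ∀ v, σ v = var (ρ v)) {A : Term NQF ℕ}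
    {θ : Subst NQF ℕ} (hA : A.Linear) (hAg : HasGroundFirstArg A)
    (hAc : ∀ v, (c.rename σ).varIn v → ¬ VarIn v A) (hθ : IsMGUPair θ A (c.rename σ).head) :
    (∀ s : Term NQF ℕ, s.Linear → (∀ v, VarIn v s → ¬ VarIn v (c.rename σ).head) →
      (s.subst θ).Linear) ∧ ∀ b ∈ (c.rename σ).body, (b.subst θ).Linear := by
  have hAH : ∀ v, VarIn v A → ¬ VarIn v (c.rename σ).head := fun v hvA hvH =>
    hAc v (.inl hvH) hvA
  by_cases h3 : c = clause3
  · subst h3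
    obtain ⟨p, a, as, hAeq, ha⟩ := hAg
    have hH : (clause3.rename σ).head = app NQF.pq [var (ρ 0),
        nqCons (var (ρ 0)) (var (ρ 1)), nqCons (var (ρ 0)) (var (ρ 2)),
        nqCons (var (ρ 0)) (var (ρ 3))] := by
      simp [clause3, Clause.rename, nqPq, nqCons, hσ]
    refine ⟨fun s hs hsH => hθ.linear_subst_of_forced_binding (x := ρ 0)
      (fun τ hτ => by simpa using first_arg_subst_eq hAeq ha hH hτ) ha ?_ hA ?_ hAH hs hsH,
      by simp [clause3, Clause.rename]⟩
    · rw [hH, ← mem_vars]; simp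
    · rw [hH, linear_iff_nodup]
      simp [nqCons, subst1, hρ.eq_iff, ground_iff_vars_eq_nil.1 ha]
  · have hH := (nqueens_head_linear c hc h3).subst_renaming hρ hσ
    refine ⟨fun s hs hsH => hθ.linear_subst hA hH hAH hs hsH, fun b hb => ?_⟩
    obtain ⟨b', hb', rfl⟩ := List.mem_map.1 hb
    exact hθ.symm.linear_subst hH hA (fun v hvH hvA => hAH v hvA hvH)
      ((nqueens_body_linear c hc b' hb').subst_renaming hρ hσ)
      fun v hvb hvA => hAc v (.inr ⟨_, hb, hvb⟩) hvA

theorem SLDStep.nqueens_linear_groundFirstArg {Q Q' : List (Term NQF ℕ)}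
    (hstep : SLDStep NQUEENS Q Q') (hQ : ∀ A ∈ Q, A.Linear ∧ HasGroundFirstArg A) :
    ∀ B ∈ Q', B.Linear ∧ HasGroundFirstArg B := by
  obtain @⟨Q1, Q2, A, c, σ, θ, hc, ⟨ρ, hσ⟩, hfresh, hθ⟩ := hstep
  have hfresh' : ∀ s ∈ Q1 ++ A :: Q2, ∀ v, VarIn v s → ¬ (c.rename σ).varIn v :=
    fun s hs v hvs hvc => hfresh v hvc ⟨s, hs, hvs⟩
  obtain ⟨hA, hAg⟩ := hQ A (by simp)
  obtain ⟨hquery, hbody⟩ := nqueens_resolvent_linear hc ρ.injective hσ hA hAg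
    (fun v hvc hvA => hfresh' A (by simp) v hvA hvc) hθ
  have hbodyg :=
    ((nqueens_firstArgVarsInHead c hc).rename σ).hasGroundFirstArg_subst hAg hθ.1
  have hq : ∀ B ∈ Q1 ++ A :: Q2, (B.subst θ).Linear ∧ HasGroundFirstArg (B.subst θ) :=
    fun B hB => ⟨hquery B (hQ B hB).1 fun v hv hvH => hfresh' B hB v hv (.inl hvH),
      (hQ B hB).2.subst θ⟩
  intro B' hB'
  obtain ⟨B, hB, rfl⟩ := List.mem_map.1 hB'
  simp only [List.mem_append] at hB
  rcases hB with (hB | hB) | hB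
  · exact hq B (by simp [hB])
  · exact ⟨hbody B hB, hbodyg B hB⟩
  · exact hq B (by simp [hB])

/-- Let `Q0 = pqs(n,t1,t2,t3)` be a linear query with `n` ground.
In any SLD-derivation for NQUEENS with `Q0` (under an arbitrary selection rule),
each atom in each query is linear. -/
theorem stmt4 (n t1 t2 t3 : Term NQF ℕ) (hn : n.Ground)
    (hlin : (nqPqs n t1 t2 t3).Linear)
    (Q : List (Term NQF ℕ)) (h : SLDReach NQUEENS [nqPqs n t1 t2 t3] Q) :
    ∀ A ∈ Q, A.Linear := by
  have hinv : ∀ A ∈ Q, A.Linear ∧ HasGroundFirstArg A := by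
    induction h with
    | refl =>
      simp only [List.mem_singleton, forall_eq]
      exact ⟨hlin, NQF.pqs, n, [t1, t2, t3], rfl, hn⟩
    | tail _ hstep ih => exact hstep.nqueens_linear_groundFirstArg ih
  exact fun A hA => (hinv A hA).1
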